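/- Let a ≠ 0 and m₁, m₂, f ∈ ℝ, m̂ᵢ = √(1+a²)·mᵢ. On the open set Ω = {(x̃,ỹ,u,v) ∈ ℝ⁴ : (x̃,ỹ) ∉ {(0,a),(0,−a)}} define E_pl := (u² + v²/(1+a²))/2 − f(x̃² + ỹ²/(1+a²)) − m₁/√(x̃² + (ỹ−a)²/(1+a²)) − m₂/√(x̃² + (ỹ+a)²/(1+a²)) and E_sp := [(1+ỹ²)u² − 2x̃ỹuv + (1+x̃²)v²]/2 − m̂₁(aỹ+1)/√((ỹ−a)² + (1+a²)x̃²) − m̂₂(1−aỹ)/√((ỹ+a)² + (1+a²)x̃²) − f(x̃² + ỹ²). Let P(x̃,ỹ,u,v) := u·(−x̃ỹu + (x̃²+1)v) − (v/(1+a²))·((ỹ²+1)u − x̃ỹv). Then: (i) at every point of Ω where P ≠ 0, the gradients (in ℝ⁴) of E_pl and E_sp are linearly independent; (ii) since a ≠ 0, the polynomial P is not identically zero, so the set {P ≠ 0} is open and dense in ℝ⁴. Consequently E_pl and E_sp are functionally independent. -/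

import Mathlib

noncomputable section

/-- Energy of the planar Lagrange problem with parameters `m₁, m₂, f`, Kepler
centers `(0, ±a)`, Hooke center at the origin, in the metric `dx² + dy²/(1+a²)`,
as a function of `(x̃, ỹ, u, v) ∈ ℝ⁴`. -/
def Epl4 (a m₁ m₂ f : ℝ) (p : ℝ × ℝ × ℝ × ℝ) : ℝ :=
  (p.2.2.1 ^ 2 + p.2.2.2 ^ 2 / (1 + a ^ 2)) / 2
    - f * (p.1 ^ 2 + p.2.1 ^ 2 / (1 + a ^ 2))
    - m₁ / Real.sqrt (p.1 ^ 2 + (p.2.1 - a) ^ 2 / (1 + a ^ 2))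
    - m₂ / Real.sqrt (p.1 ^ 2 + (p.2.1 + a) ^ 2 / (1 + a ^ 2))

/-- Energy of the corresponding spherical Lagrange problem in the gnomonic
chart, as a function of `(x̃, ỹ, u, v) ∈ ℝ⁴`. -/
def Esp4 (a mhat₁ mhat₂ f : ℝ) (p : ℝ × ℝ × ℝ × ℝ) : ℝ :=
  ((1 + p.2.1 ^ 2) * p.2.2.1 ^ 2 - 2 * p.1 * p.2.1 * p.2.2.1 * p.2.2.2
      + (1 + p.1 ^ 2) * p.2.2.2 ^ 2) / 2
    - mhat₁ * (a * p.2.1 + 1) / Real.sqrt ((p.2.1 - a) ^ 2 + (1 + a ^ 2) * p.1 ^ 2)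
    - mhat₂ * (1 - a * p.2.1) / Real.sqrt ((p.2.1 + a) ^ 2 + (1 + a ^ 2) * p.1 ^ 2)
    - f * (p.1 ^ 2 + p.2.1 ^ 2)

/-- The determinant of the `2 × 2` submatrix of the Jacobi matrix of
`(E_pl, E_sp)` formed by the velocity partial derivatives. -/
def Pdet (a : ℝ) (p : ℝ × ℝ × ℝ × ℝ) : ℝ :=
  p.2.2.1 * (-p.1 * p.2.1 * p.2.2.1 + (p.1 ^ 2 + 1) * p.2.2.2)
    - (p.2.2.2 / (1 + a ^ 2)) * ((p.2.1 ^ 2 + 1) * p.2.2.1 - p.1 * p.2.1 * p.2.2.2)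

/-! Both energies are quadratic polynomials in the velocities `(u, v)`, so their velocity
partials can be read off exactly; the resulting `2 × 2` minor of the Jacobian is `P`, and
`P ≠ 0` already forces the two gradients to be independent. The polynomial `P` is analytic and
`P (0, 0, 1, 1) = a² / (1 + a²) ≠ 0`, so by the identity principle its zero set has empty
interior. -/

theorem linearIndependent_pair_of_det_ne_zero {R M : Type*} [CommRing R] [NoZeroDivisors R]
    [TopologicalSpace R] [IsTopologicalRing R] [AddCommGroup M] [TopologicalSpace M]
    [Module R M] {φ ψ : M →L[R] R} (e₁ e₂ : M) (h : φ e₁ * ψ e₂ - φ e₂ * ψ e₁ ≠ 0) :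
    LinearIndependent R ![φ, ψ] := by
  rw [LinearIndependent.pair_iff]
  intro s t hst
  have h₁ : s * φ e₁ + t * ψ e₁ = 0 := by simpa using congr($hst e₁)
  have h₂ : s * φ e₂ + t * ψ e₂ = 0 := by simpa using congr($hst e₂)
  constructor
  · refine (mul_eq_zero.mp ?_).resolve_right h
    linear_combination ψ e₂ * h₁ - ψ e₁ * h₂
  · refine (mul_eq_zero.mp ?_).resolve_right h
    linear_combination φ e₁ * h₂ - φ e₂ * h₁

theorem AnalyticOnNhd.dense_setOf_ne_zero {𝕜 E F : Type*} [NontriviallyNormedField 𝕜]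
    [NormedAddCommGroup E] [NormedSpace 𝕜 E] [PreconnectedSpace E] [NormedAddCommGroup F]
    [NormedSpace 𝕜 F] {f : E → F} (hf : AnalyticOnNhd 𝕜 f Set.univ) {x₀ : E} (hx₀ : f x₀ ≠ 0) :
    Dense {x | f x ≠ 0} := by
  rw [← Set.compl_ofPred, ← interior_eq_empty_iff_dense_compl]
  refine Set.eq_empty_of_forall_notMem fun z hz => hx₀ ?_
  have hz : f =ᶠ[nhds z] 0 := mem_interior_iff_mem_nhds.mp hz
  exact congrFun (hf.eq_of_eventuallyEq analyticOnNhd_const hz) x₀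

theorem hasDerivAt_quadratic_zero (A B C : ℝ) :
    HasDerivAt (fun t => A + B * t + C * t ^ 2) B 0 := by
  simpa using (((hasDerivAt_id' (0 : ℝ)).const_mul B).const_add A).fun_add
    ((hasDerivAt_pow 2 (0 : ℝ)).const_mul C)

theorem HasLineDerivAt.fderiv_apply {𝕜 E F : Type*} [NontriviallyNormedField 𝕜]
    [NormedAddCommGroup E] [NormedSpace 𝕜 E] [NormedAddCommGroup F] [NormedSpace 𝕜 F]
    {f : E → F} {f' : F} {x v : E} (h : HasLineDerivAt 𝕜 f f' x v)
    (hf : DifferentiableAt 𝕜 f x) : fderiv 𝕜 f x v = f' :=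
  hf.lineDeriv_eq_fderiv ▸ h.lineDeriv

theorem sq_add_mul_sq_pos {x y c k : ℝ} (hk : 0 < k) (h : (x, y) ≠ (0, c)) :
    0 < (y - c) ^ 2 + k * x ^ 2 := by
  rcases eq_or_ne x 0 with rfl | hx
  · have : y - c ≠ 0 := sub_ne_zero.mpr fun hy => h (by rw [hy])
    positivity
  · positivity

theorem sq_add_sq_div_pos {x y c k : ℝ} (hk : 0 < k) (h : (x, y) ≠ (0, c)) :
    0 < x ^ 2 + (y - c) ^ 2 / k := by
  have := div_pos (sq_add_mul_sq_pos hk h) hk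
  rwa [add_div, mul_div_cancel_left₀ _ hk.ne', add_comm] at this

section Energies

attribute [local fun_prop] analyticAt_fst analyticAt_snd

variable (a : ℝ) {p : ℝ × ℝ × ℝ × ℝ}

theorem differentiableAt_Epl4 (m₁ m₂ f : ℝ) (h₁ : (p.1, p.2.1) ≠ (0, a))
    (h₂ : (p.1, p.2.1) ≠ (0, -a)) : DifferentiableAt ℝ (Epl4 a m₁ m₂ f) p := by
  have hs₁ := sq_add_sq_div_pos (by positivity : (0 : ℝ) < 1 + a ^ 2) h₁
  have hs₂ := sq_add_sq_div_pos (by positivity : (0 : ℝ) < 1 + a ^ 2) h₂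
  rw [sub_neg_eq_add] at hs₂
  have hr₁ := (Real.sqrt_pos.mpr hs₁).ne'
  have hr₂ := (Real.sqrt_pos.mpr hs₂).ne'
  replace hs₁ := hs₁.ne'
  replace hs₂ := hs₂.ne'
  unfold Epl4
  fun_prop (disch := assumption)

theorem differentiableAt_Esp4 (mhat₁ mhat₂ f : ℝ) (h₁ : (p.1, p.2.1) ≠ (0, a))
    (h₂ : (p.1, p.2.1) ≠ (0, -a)) : DifferentiableAt ℝ (Esp4 a mhat₁ mhat₂ f) p := by
  have hs₁ := sq_add_mul_sq_pos (by positivity : (0 : ℝ) < 1 + a ^ 2) h₁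
  have hs₂ := sq_add_mul_sq_pos (by positivity : (0 : ℝ) < 1 + a ^ 2) h₂
  rw [sub_neg_eq_add] at hs₂
  have hr₁ := (Real.sqrt_pos.mpr hs₁).ne'
  have hr₂ := (Real.sqrt_pos.mpr hs₂).ne'
  replace hs₁ := hs₁.ne'
  replace hs₂ := hs₂.ne'
  unfold Esp4
  fun_prop (disch := assumption)

theorem Epl4_add_velocity (m₁ m₂ f α β t : ℝ) :
    Epl4 a m₁ m₂ f (p + t • (0, 0, α, β)) = Epl4 a m₁ m₂ f p
      + (p.2.2.1 * α + p.2.2.2 * β / (1 + a ^ 2)) * t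
      + (α ^ 2 + β ^ 2 / (1 + a ^ 2)) / 2 * t ^ 2 := by
  simp only [Epl4, Prod.fst_add, Prod.snd_add, Prod.smul_fst, Prod.smul_snd, smul_eq_mul,
    mul_zero, add_zero]
  ring

theorem Esp4_add_velocity (mhat₁ mhat₂ f α β t : ℝ) :
    Esp4 a mhat₁ mhat₂ f (p + t • (0, 0, α, β)) = Esp4 a mhat₁ mhat₂ f p
      + (((1 + p.2.1 ^ 2) * p.2.2.1 - p.1 * p.2.1 * p.2.2.2) * α
        + ((1 + p.1 ^ 2) * p.2.2.2 - p.1 * p.2.1 * p.2.2.1) * β) * t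
      + ((1 + p.2.1 ^ 2) * α ^ 2 - 2 * p.1 * p.2.1 * α * β + (1 + p.1 ^ 2) * β ^ 2) / 2
        * t ^ 2 := by
  simp only [Esp4, Prod.fst_add, Prod.snd_add, Prod.smul_fst, Prod.smul_snd, smul_eq_mul,
    mul_zero, add_zero]
  ring

theorem hasLineDerivAt_Epl4_velocity (m₁ m₂ f α β : ℝ) :
    HasLineDerivAt ℝ (Epl4 a m₁ m₂ f) (p.2.2.1 * α + p.2.2.2 * β / (1 + a ^ 2)) p
      (0, 0, α, β) := by
  simp only [HasLineDerivAt, Epl4_add_velocity]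
  exact hasDerivAt_quadratic_zero _ _ _

theorem hasLineDerivAt_Esp4_velocity (mhat₁ mhat₂ f α β : ℝ) :
    HasLineDerivAt ℝ (Esp4 a mhat₁ mhat₂ f)
      (((1 + p.2.1 ^ 2) * p.2.2.1 - p.1 * p.2.1 * p.2.2.2) * α
        + ((1 + p.1 ^ 2) * p.2.2.2 - p.1 * p.2.1 * p.2.2.1) * β) p (0, 0, α, β) := by
  simp only [HasLineDerivAt, Esp4_add_velocity]
  exact hasDerivAt_quadratic_zero _ _ _

theorem analyticOnNhd_Pdet : AnalyticOnNhd ℝ (Pdet a) Set.univ := by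
  intro p _
  unfold Pdet
  fun_prop

theorem Pdet_zero_zero_one_one : Pdet a (0, 0, 1, 1) = a ^ 2 / (1 + a ^ 2) := by
  simp only [Pdet]
  field_simp
  ring

end Energies

theorem planar_spherical_energies_functionally_independent_general
    (a m₁ m₂ f mhat₁ mhat₂ : ℝ) (ha : a ≠ 0) :
    (∀ p : ℝ × ℝ × ℝ × ℝ, (p.1, p.2.1) ≠ ((0 : ℝ), a) → (p.1, p.2.1) ≠ ((0 : ℝ), -a) →
        Pdet a p ≠ 0 →
        LinearIndependent ℝ
          ![fderiv ℝ (Epl4 a m₁ m₂ f) p, fderiv ℝ (Esp4 a mhat₁ mhat₂ f) p])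
      ∧ (¬ ∀ p : ℝ × ℝ × ℝ × ℝ, Pdet a p = 0)
      ∧ IsOpen {p : ℝ × ℝ × ℝ × ℝ | Pdet a p ≠ 0}
      ∧ Dense {p : ℝ × ℝ × ℝ × ℝ | Pdet a p ≠ 0} := by
  have hP : Pdet a (0, 0, 1, 1) ≠ 0 := by
    rw [Pdet_zero_zero_one_one]
    positivity
  refine ⟨fun p h₁ h₂ hp => ?_, fun h => hP (h _),
    isOpen_ne_fun (analyticOnNhd_Pdet a).continuous continuous_const,
    (analyticOnNhd_Pdet a).dense_setOf_ne_zero hP⟩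
  have hpl := differentiableAt_Epl4 a m₁ m₂ f h₁ h₂
  have hsp := differentiableAt_Esp4 a mhat₁ mhat₂ f h₁ h₂
  refine linearIndependent_pair_of_det_ne_zero (0, 0, 1, 0) (0, 0, 0, 1) ?_
  rw [(hasLineDerivAt_Epl4_velocity a m₁ m₂ f 1 0).fderiv_apply hpl,
    (hasLineDerivAt_Epl4_velocity a m₁ m₂ f 0 1).fderiv_apply hpl,
    (hasLineDerivAt_Esp4_velocity a mhat₁ mhat₂ f 1 0).fderiv_apply hsp,
    (hasLineDerivAt_Esp4_velocity a mhat₁ mhat₂ f 0 1).fderiv_apply hsp]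
  convert hp using 1
  simp only [Pdet]
  ring

/-- Functional independence of the planar and spherical Lagrange energies:
(i) wherever `P ≠ 0` (on the domain avoiding the Kepler centers) the gradients
of `E_pl` and `E_sp` are linearly independent; (ii) since `a ≠ 0`, `P` is not
identically zero, and the set `{P ≠ 0}` is open and dense in `ℝ⁴`. -/
theorem planar_spherical_energies_functionally_independent
    (a m₁ m₂ f mhat₁ mhat₂ : ℝ) (ha : a ≠ 0)
    (hm₁ : mhat₁ = Real.sqrt (1 + a ^ 2) * m₁)
    (hm₂ : mhat₂ = Real.sqrt (1 + a ^ 2) * m₂) :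
    (∀ p : ℝ × ℝ × ℝ × ℝ, (p.1, p.2.1) ≠ ((0 : ℝ), a) → (p.1, p.2.1) ≠ ((0 : ℝ), -a) →
        Pdet a p ≠ 0 →
        LinearIndependent ℝ
          ![fderiv ℝ (Epl4 a m₁ m₂ f) p, fderiv ℝ (Esp4 a mhat₁ mhat₂ f) p])
      ∧ (¬ ∀ p : ℝ × ℝ × ℝ × ℝ, Pdet a p = 0)
      ∧ IsOpen {p : ℝ × ℝ × ℝ × ℝ | Pdet a p ≠ 0}
      ∧ Dense {p : ℝ × ℝ × ℝ × ℝ | Pdet a p ≠ 0} :=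
  planar_spherical_energies_functionally_independent_general a m₁ m₂ f mhat₁ mhat₂ ha
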